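/- Let Γ̂ and Γ be symmetric n×n matrices and δ > 0. Suppose vᵀΓv ≥ δ‖v‖₂² for all v with ‖v‖₁ ≤ 4√s‖v‖₂, and |vᵀ(Γ̂ - Γ)v| ≤ δ/150 for all v with ‖v‖₀ ≤ 2s and ‖v‖₂ ≤ 1. Then vᵀΓ̂v ≥ (δ/2)‖v‖₂² for all v with ‖v‖₁ ≤ 4√s‖v‖₂. -/

import Mathlib

/-!
Sort the coordinates of `v` by decreasing absolute value and cut them into consecutive blocks
`X₀, X₁, …` of `s` coordinates each. Every entry of `X_{k+1}` is at most the mean absolute entry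
of `X_k`, so `‖X_{k+1}‖₂ ≤ ‖X_k‖₁ / √s` and `∑ ‖X_k‖₂ ≤ ‖v‖₂ + ‖v‖₁ / √s ≤ 5 ‖v‖₂` on the cone.
Polarization turns the bound on quadratic forms of `Δ = Γ̂ - Γ` at `2s`-sparse vectors into
`|X_kᵀΔX_l + X_lᵀΔX_k| ≤ 2 (δ/150) ‖X_k‖₂ ‖X_l‖₂`, hence
`|vᵀΔv| ≤ (δ/150) (∑ ‖X_k‖₂)² ≤ (δ/6) ‖v‖₂²` and `vᵀΓ̂v ≥ vᵀΓv - (δ/6) ‖v‖₂² ≥ (δ/2) ‖v‖₂²`.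
-/

open Matrix Finset

theorem sum_sq_mul_card_le_sq_sum_abs {ι : Type*} (A B : Finset ι) (f : ι → ℝ)
    (hcard : #B ≤ #A) (hle : ∀ i ∈ B, ∀ j ∈ A, |f i| ≤ |f j|) :
    (∑ i ∈ B, f i ^ 2) * #A ≤ (∑ j ∈ A, |f j|) ^ 2 := by
  rcases A.eq_empty_or_nonempty with rfl | hA
  · simp
  set L := ∑ j ∈ A, |f j|
  have hpoint : ∀ i ∈ B, (#A : ℝ) * |f i| ≤ L := fun i hi => by
    simpa using card_nsmul_le_sum A (fun j => |f j|) |f i| (hle i hi)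
  have hsq : (∑ i ∈ B, f i ^ 2) * #A ^ 2 ≤ #A * L ^ 2 := calc
    (∑ i ∈ B, f i ^ 2) * #A ^ 2 = ∑ i ∈ B, ((#A : ℝ) * |f i|) ^ 2 := by
      rw [sum_mul]; exact sum_congr rfl fun i _ => by rw [mul_pow, sq_abs]; ring
    _ ≤ ∑ _i ∈ B, L ^ 2 := sum_le_sum fun i hi => pow_le_pow_left₀ (by positivity) (hpoint i hi) 2
    _ = #B * L ^ 2 := by rw [sum_const, nsmul_eq_mul]
    _ ≤ #A * L ^ 2 := by gcongr
  have hApos : (0 : ℝ) < #A := by exact_mod_cast hA.card_pos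
  nlinarith

noncomputable section Blocks

variable {n : ℕ} (s : ℕ) (v : Fin n → ℝ)

def absRank : Fin n ≃ Fin n := (Tuple.sort fun i => -|v i|).symm

theorem abs_le_abs_of_absRank_le {i j : Fin n} (h : absRank v i ≤ absRank v j) :
    |v j| ≤ |v i| := by
  simpa [absRank] using Tuple.monotone_sort (fun i => -|v i|) h

def rankBlock (k : ℕ) : Finset (Fin n) := {i | (absRank v i : ℕ) / s = k}

def blockPart (k : ℕ) (i : Fin n) : ℝ := if i ∈ rankBlock s v k then v i else 0

variable {s}

theorem card_rankBlock_le (hs : 0 < s) (k : ℕ) : #(rankBlock s v k) ≤ s := by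
  have hmaps : Set.MapsTo (fun i => (absRank v i : ℕ)) (rankBlock s v k)
      (Ico (k * s) (k * s + s)) := by
    intro i hi
    simp only [rankBlock, coe_filter, mem_univ, true_and, Set.mem_ofPred_eq] at hi
    simp only [coe_Ico, Set.mem_Ico]
    have := (Nat.div_eq_iff hs).mp hi
    omega
  simpa using card_le_card_of_injOn _ hmaps fun i _ j _ hij => (absRank v).injective (Fin.ext hij)

theorem le_card_rankBlock (hs : 0 < s) {k : ℕ} (hne : (rankBlock s v (k + 1)).Nonempty) :
    s ≤ #(rankBlock s v k) := by
  obtain ⟨i₀, hi₀⟩ := hne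
  simp only [rankBlock, mem_filter, mem_univ, true_and] at hi₀
  have hi₀ := (Nat.div_eq_iff hs).mp hi₀
  have hsurj : Set.SurjOn (fun i => (absRank v i : ℕ)) (rankBlock s v k)
      (Ico (k * s) (k * s + s)) := by
    intro m hm
    simp only [coe_Ico, Set.mem_Ico] at hm
    have hmn : m < n := by have := (absRank v i₀).isLt; rw [add_mul] at hi₀; omega
    refine ⟨(absRank v).symm ⟨m, hmn⟩, ?_, by simp⟩
    simp only [rankBlock, coe_filter, mem_univ, true_and, Set.mem_ofPred_eq, Equiv.apply_symm_apply]
    exact (Nat.div_eq_iff hs).mpr (by omega)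
  simpa using card_le_card_of_surjOn _ hsurj

theorem abs_le_abs_of_mem_rankBlock_succ {k : ℕ} {i j : Fin n} (hi : i ∈ rankBlock s v (k + 1))
    (hj : j ∈ rankBlock s v k) : |v i| ≤ |v j| := by
  simp only [rankBlock, mem_filter, mem_univ, true_and] at hi hj
  refine abs_le_abs_of_absRank_le v (le_of_lt ?_)
  by_contra! h
  have := Nat.div_le_div_right (c := s) (Fin.le_def.mp h)
  omega

theorem sum_sq_blockPart (k : ℕ) : ∑ i, blockPart s v k i ^ 2 = ∑ i ∈ rankBlock s v k, v i ^ 2 := by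
  simp [blockPart, ite_pow, sum_ite_mem]

theorem support_blockPart_ncard_le (hs : 0 < s) (k : ℕ) :
    (Function.support (blockPart s v k)).ncard ≤ s := by
  have hsub : Function.support (blockPart s v k) ⊆ rankBlock s v k := fun i hi => by
    by_contra h; exact hi (if_neg h)
  exact (Set.ncard_le_ncard hsub (finite_toSet _)).trans
    ((Set.ncard_coe_finset _).trans_le (card_rankBlock_le v hs k))

theorem sum_blockPart : ∑ k ∈ range (n + 1), blockPart s v k = v := by
  funext i
  have hlt : (absRank v i : ℕ) / s < n + 1 :=
    Nat.lt_succ_of_le ((Nat.div_le_self _ _).trans (absRank v i).isLt.le)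
  simp [blockPart, rankBlock, Finset.sum_apply, hlt]

theorem sum_sum_abs_rankBlock : ∑ k ∈ range n, ∑ i ∈ rankBlock s v k, |v i| = ∑ i, |v i| :=
  sum_fiberwise_of_maps_to (fun i _ => mem_range.mpr
    ((Nat.div_le_self _ _).trans_lt (absRank v i).isLt)) _

theorem sqrt_sum_sq_rankBlock_succ_le (hs : 0 < s) (k : ℕ) :
    √(∑ i ∈ rankBlock s v (k + 1), v i ^ 2) ≤ (∑ i ∈ rankBlock s v k, |v i|) / √s := by
  rcases (rankBlock s v (k + 1)).eq_empty_or_nonempty with hempty | hne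
  · rw [hempty, sum_empty, Real.sqrt_zero]; positivity
  have hcard : #(rankBlock s v k) = s :=
    (card_rankBlock_le v hs k).antisymm (le_card_rankBlock v hs hne)
  have key := sum_sq_mul_card_le_sq_sum_abs _ _ v
    ((card_rankBlock_le v hs (k + 1)).trans hcard.ge)
    fun i hi j hj => abs_le_abs_of_mem_rankBlock_succ v hi hj
  rw [hcard] at key
  have hs' : (0 : ℝ) < s := by exact_mod_cast hs
  rw [Real.sqrt_le_left (by positivity), div_pow, Real.sq_sqrt hs'.le, le_div_iff₀ hs']
  exact key

theorem sum_sqrt_sum_sq_blockPart_le (hs : 0 < s) :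
    ∑ k ∈ range (n + 1), √(∑ i, blockPart s v k i ^ 2) ≤ √(∑ i, v i ^ 2) + (∑ i, |v i|) / √s := by
  simp only [sum_sq_blockPart]
  rw [sum_range_succ', add_comm, ← sum_sum_abs_rankBlock (s := s), sum_div]
  gcongr with k
  · exact subset_univ _
  · exact sqrt_sum_sq_rankBlock_succ_le v hs k

theorem exists_sparse_decomposition (hs : 0 < s) : ∃ X : ℕ → Fin n → ℝ,
    (∀ k, (Function.support (X k)).ncard ≤ s) ∧ ∑ k ∈ range (n + 1), X k = v ∧
      ∑ k ∈ range (n + 1), √(∑ i, X k i ^ 2) ≤ √(∑ i, v i ^ 2) + (∑ i, |v i|) / √s :=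
  ⟨blockPart s v, support_blockPart_ncard_le v hs, sum_blockPart v,
    sum_sqrt_sum_sq_blockPart_le v hs⟩

end Blocks

section QuadraticForm

variable {ι : Type*} [Fintype ι] (M : Matrix ι ι ℝ)

theorem sqrt_sum_sq_eq_zero_iff {u : ι → ℝ} : √(∑ i, u i ^ 2) = 0 ↔ u = 0 := by
  rw [Real.sqrt_eq_zero (by positivity), Fintype.sum_eq_zero_iff_of_nonneg fun i => sq_nonneg (u i)]
  simp [funext_iff]

theorem sum_smul_sq (c : ℝ) (u : ι → ℝ) : ∑ i, (c • u) i ^ 2 = c ^ 2 * ∑ i, u i ^ 2 := by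
  simp [mul_sum, mul_pow]

theorem smul_dotProduct_mulVec_smul (c d : ℝ) (x y : ι → ℝ) :
    (c • x) ⬝ᵥ M *ᵥ (d • y) = c * d * (x ⬝ᵥ M *ᵥ y) := by
  rw [mulVec_smul, dotProduct_smul, smul_dotProduct, smul_eq_mul, smul_eq_mul]; ring

theorem ncard_support_add_le (x y : ι → ℝ) :
    (Function.support (x + y)).ncard ≤ (Function.support x).ncard + (Function.support y).ncard :=
  (Set.ncard_le_ncard (Function.support_add x y) (Set.toFinite _)).trans (Set.ncard_union_le _ _)

theorem abs_dotProduct_mulVec_self_le_of_unitBall {m : ℕ} {ε : ℝ}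
    (h : ∀ u : ι → ℝ, (Function.support u).ncard ≤ m → √(∑ i, u i ^ 2) ≤ 1 →
      |u ⬝ᵥ M *ᵥ u| ≤ ε)
    {u : ι → ℝ} (hu : (Function.support u).ncard ≤ m) : |u ⬝ᵥ M *ᵥ u| ≤ ε * ∑ i, u i ^ 2 := by
  set r := √(∑ i, u i ^ 2)
  rcases (Real.sqrt_nonneg _ : 0 ≤ r).eq_or_lt with hr | hr
  · obtain rfl := sqrt_sum_sq_eq_zero_iff.mp hr.symm
    simp
  have hr0 : r ≠ 0 := hr.ne'
  have hr2 : r ^ 2 = ∑ i, u i ^ 2 := Real.sq_sqrt (by positivity)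
  have hunit := h (r⁻¹ • u)
    (by rwa [Function.support_const_smul_of_ne_zero _ _ (inv_ne_zero hr0)])
    (by rw [sum_smul_sq, ← hr2, inv_pow, inv_mul_cancel₀ (by positivity), Real.sqrt_one])
  rw [smul_dotProduct_mulVec_smul, abs_mul, abs_of_pos (by positivity)] at hunit
  calc |u ⬝ᵥ M *ᵥ u| = r ^ 2 * (r⁻¹ * r⁻¹ * |u ⬝ᵥ M *ᵥ u|) := by field_simp
    _ ≤ r ^ 2 * ε := by gcongr
    _ = ε * ∑ i, u i ^ 2 := by rw [hr2, mul_comm]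

theorem abs_dotProduct_mulVec_add_le {ε : ℝ} {x y : ι → ℝ}
    (hadd : |(x + y) ⬝ᵥ M *ᵥ (x + y)| ≤ ε * ∑ i, (x + y) i ^ 2)
    (hsub : |(x - y) ⬝ᵥ M *ᵥ (x - y)| ≤ ε * ∑ i, (x - y) i ^ 2) :
    |x ⬝ᵥ M *ᵥ y + y ⬝ᵥ M *ᵥ x| ≤ ε * (∑ i, x i ^ 2 + ∑ i, y i ^ 2) := by
  have hpolar : 2 * (x ⬝ᵥ M *ᵥ y + y ⬝ᵥ M *ᵥ x) =
      (x + y) ⬝ᵥ M *ᵥ (x + y) - (x - y) ⬝ᵥ M *ᵥ (x - y) := by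
    simp only [mulVec_add, mulVec_sub, dotProduct_add, dotProduct_sub, add_dotProduct,
      sub_dotProduct]
    ring
  have hparallelogram : ∑ i, (x + y) i ^ 2 + ∑ i, (x - y) i ^ 2 =
      2 * (∑ i, x i ^ 2 + ∑ i, y i ^ 2) := by
    simp only [Pi.add_apply, Pi.sub_apply, ← sum_add_distrib, mul_sum]
    exact sum_congr rfl fun i _ => by ring
  have hscaled := congrArg (ε * ·) hparallelogram
  simp only [mul_add] at hscaled
  rw [abs_le] at hadd hsub ⊢
  constructor <;> linarith

theorem abs_dotProduct_mulVec_add_le_of_sparse {s : ℕ} {ε : ℝ}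
    (hq : ∀ u : ι → ℝ, (Function.support u).ncard ≤ 2 * s →
      |u ⬝ᵥ M *ᵥ u| ≤ ε * ∑ i, u i ^ 2)
    {x y : ι → ℝ} (hx : (Function.support x).ncard ≤ s) (hy : (Function.support y).ncard ≤ s) :
    |x ⬝ᵥ M *ᵥ y + y ⬝ᵥ M *ᵥ x| ≤ 2 * ε * (√(∑ i, x i ^ 2) * √(∑ i, y i ^ 2)) := by
  set a := √(∑ i, x i ^ 2)
  set b := √(∑ i, y i ^ 2)
  rcases (mul_nonneg (Real.sqrt_nonneg _) (Real.sqrt_nonneg _) : 0 ≤ a * b).eq_or_lt with hab | hab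
  · rcases mul_eq_zero.mp hab.symm with ha | hb
    · obtain rfl := sqrt_sum_sq_eq_zero_iff.mp ha
      simp [ha]
    · obtain rfl := sqrt_sum_sq_eq_zero_iff.mp hb
      simp [hb]
  have ha2 : a ^ 2 = ∑ i, x i ^ 2 := Real.sq_sqrt (by positivity)
  have hb2 : b ^ 2 = ∑ i, y i ^ 2 := Real.sq_sqrt (by positivity)
  have hsupp : ∀ c : ℝ, ∀ z : ι → ℝ, (Function.support z).ncard ≤ s →
      (Function.support (c • z)).ncard ≤ s := fun c z hz =>
    (Set.ncard_le_ncard (Function.support_const_smul_subset c z) (Set.toFinite _)).trans hz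
  have hsum : ∀ z w : ι → ℝ, (Function.support z).ncard ≤ s → (Function.support w).ncard ≤ s →
      (Function.support (z + w)).ncard ≤ 2 * s := fun z w hz hw =>
    (ncard_support_add_le z w).trans (by omega)
  have hbal := abs_dotProduct_mulVec_add_le M
    (hq _ (hsum _ _ (hsupp b x hx) (hsupp a y hy)))
    (hq _ (sub_eq_add_neg (b • x) (a • y) ▸
      hsum _ _ (hsupp b x hx) (Function.support_neg (a • y) ▸ hsupp a y hy)))
  rw [smul_dotProduct_mulVec_smul, smul_dotProduct_mulVec_smul, sum_smul_sq, sum_smul_sq,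
    ← ha2, ← hb2] at hbal
  refine le_of_mul_le_mul_left ?_ hab
  calc a * b * |x ⬝ᵥ M *ᵥ y + y ⬝ᵥ M *ᵥ x|
      = |b * a * (x ⬝ᵥ M *ᵥ y) + a * b * (y ⬝ᵥ M *ᵥ x)| := by
        rw [show b * a * (x ⬝ᵥ M *ᵥ y) + a * b * (y ⬝ᵥ M *ᵥ x) =
          a * b * (x ⬝ᵥ M *ᵥ y + y ⬝ᵥ M *ᵥ x) by ring, abs_mul, abs_of_pos hab]
    _ ≤ ε * (b ^ 2 * a ^ 2 + a ^ 2 * b ^ 2) := hbal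
    _ = a * b * (2 * ε * (a * b)) := by ring

theorem abs_sum_dotProduct_mulVec_sum_le {κ : Type*} (K : Finset κ) (X : κ → ι → ℝ) (c : κ → ℝ)
    {ε : ℝ} (h : ∀ k ∈ K, ∀ l ∈ K, |X k ⬝ᵥ M *ᵥ X l + X l ⬝ᵥ M *ᵥ X k| ≤ 2 * ε * (c k * c l)) :
    |(∑ k ∈ K, X k) ⬝ᵥ M *ᵥ ∑ k ∈ K, X k| ≤ ε * (∑ k ∈ K, c k) ^ 2 := by
  have hsymm : 2 * ((∑ k ∈ K, X k) ⬝ᵥ M *ᵥ ∑ k ∈ K, X k) =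
      ∑ k ∈ K, ∑ l ∈ K, (X k ⬝ᵥ M *ᵥ X l + X l ⬝ᵥ M *ᵥ X k) := by
    simp only [mulVec_sum, sum_dotProduct, dotProduct_sum, sum_add_distrib]
    rw [sum_comm (f := fun k l => X l ⬝ᵥ M *ᵥ X k)]
    ring
  have hbound : |2 * ((∑ k ∈ K, X k) ⬝ᵥ M *ᵥ ∑ k ∈ K, X k)| ≤ 2 * ε * (∑ k ∈ K, c k) ^ 2 := calc
    _ ≤ ∑ k ∈ K, ∑ l ∈ K, |X k ⬝ᵥ M *ᵥ X l + X l ⬝ᵥ M *ᵥ X k| :=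
      hsymm ▸ (abs_sum_le_sum_abs _ _).trans (sum_le_sum fun k _ => abs_sum_le_sum_abs _ _)
    _ ≤ ∑ k ∈ K, ∑ l ∈ K, 2 * ε * (c k * c l) :=
      sum_le_sum fun k hk => sum_le_sum fun l hl => h k hk l hl
    _ = 2 * ε * (∑ k ∈ K, c k) ^ 2 := by rw [sq, sum_mul_sum, mul_sum]; simp_rw [mul_sum]
  rw [abs_mul, abs_two] at hbound
  linarith

end QuadraticForm

theorem restricted_eigenvalue_transfer_cone_general (n s : ℕ) (hs : 1 ≤ s) (δ : ℝ) (hδ : 0 < δ)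
    (Γhat Γ : Matrix (Fin n) (Fin n) ℝ)
    (hlow : ∀ v : Fin n → ℝ, (∑ i, |v i|) ≤ 4 * Real.sqrt s * Real.sqrt (∑ i, v i ^ 2) →
      δ * ∑ i, v i ^ 2 ≤ v ⬝ᵥ Γ.mulVec v)
    (hdev : ∀ v : Fin n → ℝ, Set.ncard {i | v i ≠ 0} ≤ 2 * s →
      Real.sqrt (∑ i, v i ^ 2) ≤ 1 → |v ⬝ᵥ (Γhat - Γ).mulVec v| ≤ δ / 150) :
    ∀ v : Fin n → ℝ, (∑ i, |v i|) ≤ 4 * Real.sqrt s * Real.sqrt (∑ i, v i ^ 2) →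
      δ / 2 * ∑ i, v i ^ 2 ≤ v ⬝ᵥ Γhat.mulVec v := by
  intro v hv
  obtain ⟨X, hXsparse, hXv, hXnorm⟩ := exists_sparse_decomposition v hs
  have hsparse (u : Fin n → ℝ) (hu : (Function.support u).ncard ≤ 2 * s) :=
    abs_dotProduct_mulVec_self_le_of_unitBall _ hdev hu
  have hblocks := abs_sum_dotProduct_mulVec_sum_le (Γhat - Γ) (range (n + 1)) X _
    fun k _ l _ => abs_dotProduct_mulVec_add_le_of_sparse _ hsparse (hXsparse k) (hXsparse l)
  rw [hXv] at hblocks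
  have hnorms : ∑ k ∈ range (n + 1), √(∑ i, X k i ^ 2) ≤ 5 * √(∑ i, v i ^ 2) := by
    have hs' : (0 : ℝ) < √s := Real.sqrt_pos.mpr (by exact_mod_cast hs)
    have hcone : (∑ i, |v i|) / √s ≤ 4 * √(∑ i, v i ^ 2) := by
      rw [div_le_iff₀ hs']; linarith
    linarith
  have hΔ : |v ⬝ᵥ (Γhat - Γ) *ᵥ v| ≤ δ / 6 * ∑ i, v i ^ 2 := calc
    _ ≤ δ / 150 * (∑ k ∈ range (n + 1), √(∑ i, X k i ^ 2)) ^ 2 := hblocks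
    _ ≤ δ / 150 * (5 * √(∑ i, v i ^ 2)) ^ 2 := by gcongr
    _ = δ / 6 * ∑ i, v i ^ 2 := by rw [mul_pow, Real.sq_sqrt (by positivity)]; ring
  have hsplit : v ⬝ᵥ Γhat *ᵥ v = v ⬝ᵥ Γ *ᵥ v + v ⬝ᵥ (Γhat - Γ) *ᵥ v := by
    rw [sub_mulVec, dotProduct_sub]; ring
  have hv2 : 0 ≤ δ * ∑ i, v i ^ 2 := by positivity
  linarith [hlow v hv, (abs_le.mp hΔ).1]

/-- Restricted eigenvalue transfer on the cone: if `vᵀΓv ≥ δ‖v‖₂²` for all `v` with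
`‖v‖₁ ≤ 4√s‖v‖₂`, and `|vᵀ(Γ̂ - Γ)v| ≤ δ/150` for all `2s`-sparse `v` in the ℓ₂-unit ball,
then `vᵀΓ̂v ≥ (δ/2)‖v‖₂²` for all `v` with `‖v‖₁ ≤ 4√s‖v‖₂`. -/
theorem restricted_eigenvalue_transfer_cone (n s : ℕ) (hs : 1 ≤ s) (δ : ℝ) (hδ : 0 < δ)
    (Γhat Γ : Matrix (Fin n) (Fin n) ℝ) (hΓhat : Γhat.IsSymm) (hΓ : Γ.IsSymm)
    (hlow : ∀ v : Fin n → ℝ, (∑ i, |v i|) ≤ 4 * Real.sqrt s * Real.sqrt (∑ i, v i ^ 2) →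
      δ * ∑ i, v i ^ 2 ≤ v ⬝ᵥ Γ.mulVec v)
    (hdev : ∀ v : Fin n → ℝ, Set.ncard {i | v i ≠ 0} ≤ 2 * s →
      Real.sqrt (∑ i, v i ^ 2) ≤ 1 → |v ⬝ᵥ (Γhat - Γ).mulVec v| ≤ δ / 150) :
    ∀ v : Fin n → ℝ, (∑ i, |v i|) ≤ 4 * Real.sqrt s * Real.sqrt (∑ i, v i ^ 2) →
      δ / 2 * ∑ i, v i ^ 2 ≤ v ⬝ᵥ Γhat.mulVec v :=
  restricted_eigenvalue_transfer_cone_general n s hs δ hδ Γhat Γ hlow hdev
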